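/- Spherical median ratio: let ABC be an equilateral spherical triangle on the unit sphere with side length s ∈ (0, π/2), F the midpoint of the arc BC, and D the circumcenter (the point on the arc AF equidistant from A, B, C). Then d(D,F) > (1/3) · d(A,F), distances being spherical (angular) distances. -/
import Mathlib

open Real RealInnerProductSpace

/-- The spherical (angular) distance between points of the unit sphere. -/
noncomputable def sDist (x y : EuclideanSpace ℝ (Fin 3)) : ℝ := Real.arccos ⟪x, y⟫

/-- The minimizing great-circle arc between `x` and `y` on the unit sphere (as a metric
segment for the angular distance). -/
def sArc (x y : EuclideanSpace ℝ (Fin 3)) : Set (EuclideanSpace ℝ (Fin 3)) :=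
  {p | ‖p‖ = 1 ∧ sDist x p + sDist p y = sDist x y}

lemma cos_sDist (x y : EuclideanSpace ℝ (Fin 3)) (hx : ‖x‖ = 1) (hy : ‖y‖ = 1) :
    Real.cos (sDist x y) = ⟪x, y⟫ := by
  have h := abs_real_inner_le_norm x y
  rw [hx, hy, mul_one] at h
  have h' := abs_le.mp h
  exact Real.cos_arccos h'.1 h'.2

lemma sDist_nonneg (x y : EuclideanSpace ℝ (Fin 3)) : 0 ≤ sDist x y := Real.arccos_nonneg _

lemma sDist_le_pi (x y : EuclideanSpace ℝ (Fin 3)) : sDist x y ≤ π := Real.arccos_le_pi _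

/-- Key polynomial inequality: with `u = cos(s/2)` and `x = cos(m/3)` for the median `m`,
the relation `2u² - 1 = u(4x³ - 3x)` together with `ux ≤ 2x² - 1` is impossible. -/
lemma median_key (u x : ℝ) (hu : 0 < u) (hx0 : 0 < x) (hx2 : 3/4 < x^2) (hx1 : x < 1)
    (h1 : 2*u^2 - 1 = u*(4*x^3 - 3*x)) (h2 : u*x ≤ 2*x^2 - 1) : False := by
  have h3 : 0 ≤ (2*x^2-1) - u*x := by linarith
  have hxx : x^2 < 1 := by nlinarith
  have h4 : 0 < -4*x^4+7*x^2-2 + 2*u*x := by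
    nlinarith [mul_pos (show (0:ℝ) < x^2-3/4 by linarith) (show (0:ℝ) < 1-x^2 by linarith),
      mul_pos hu hx0]
  have h5 : 0 < (x^2-1)^2*(4*x^2-1) := by
    have h6 := mul_pos (show (0:ℝ) < 1-x^2 by linarith) (show (0:ℝ) < 1-x^2 by linarith)
    nlinarith
  nlinarith [mul_nonneg h3 h4.le, h1, h5, mul_pos hu hx0]

lemma sq_gt_of_gt_sqrt3div2 {x : ℝ} (h : Real.sqrt 3 / 2 < x) : 3/4 < x^2 := by
  have h0 : (0:ℝ) ≤ Real.sqrt 3 / 2 := by positivity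
  have := mul_lt_mul' h.le h h0 (h0.trans_lt h)
  have h3 : Real.sqrt 3 / 2 * (Real.sqrt 3 / 2) = 3/4 := by
    rw [div_mul_div_comm, Real.mul_self_sqrt (by norm_num : (3:ℝ) ≥ 0).le]
    norm_num
  nlinarith [Real.sq_sqrt (show (0:ℝ) ≤ 3 by norm_num)]

/-- Spherical median ratio: in an equilateral spherical triangle `ABC` of side `s ∈ (0, π/2)`
on the unit sphere, with `F` the midpoint of the arc `BC` and `D` the circumcenter (the point
on the arc `AF` equidistant from the vertices), one has `d(D,F) > (1/3)·d(A,F)`. -/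
theorem spherical_median_ratio (A B C F D : EuclideanSpace ℝ (Fin 3)) (s : ℝ)
    (hs : s ∈ Set.Ioo 0 (π / 2))
    (hA : ‖A‖ = 1) (hB : ‖B‖ = 1) (hC : ‖C‖ = 1)
    (hABs : sDist A B = s) (hBCs : sDist B C = s) (hCAs : sDist C A = s)
    (hF : F ∈ sArc B C) (hFmid : sDist B F = sDist F C)
    (hD : D ∈ sArc A F)
    (hDA : sDist D A = sDist D B) (hDB : sDist D B = sDist D C) :
    sDist D F > (1 / 3) * sDist A F := by
  obtain ⟨hs0, hs2⟩ := hs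
  have hpi := Real.pi_pos
  simp only [sArc, Set.mem_setOf_eq] at hF hD
  set t : ℝ := Real.cos s with ht_def
  set u : ℝ := Real.cos (s/2) with hu_def
  have hFn : ‖F‖ = 1 := hF.1
  have hDn : ‖D‖ = 1 := hD.1
  -- basic facts about t, u
  have ht : 0 < t := Real.cos_pos_of_mem_Ioo ⟨by linarith, hs2⟩
  have hu : 0 < u := Real.cos_pos_of_mem_Ioo ⟨by linarith, by linarith⟩
  have hu1 : u < 1 := by
    have := Real.cos_lt_cos_of_nonneg_of_le_pi (le_refl 0) (by linarith) (by linarith : (0:ℝ) < s/2)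
    simpa using this
  have htu : t = 2*u^2 - 1 := by
    have h := Real.cos_two_mul (s/2)
    rw [show 2*(s/2) = s by ring] at h
    rw [ht_def, hu_def, h]
  have htltu : t < u := by nlinarith [mul_pos hu hu, sq_nonneg (u-1)]
  -- inner products among vertices
  have hiAB : ⟪A, B⟫ = t := by
    rw [← cos_sDist A B hA hB, hABs]
  have hiBC : ⟪B, C⟫ = t := by
    rw [← cos_sDist B C hB hC, hBCs]
  have hiCA : ⟪C, A⟫ = t := by
    rw [← cos_sDist C A hC hA, hCAs]
  have hiAC : ⟪A, C⟫ = t := by rw [real_inner_comm]; exact hiCA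
  have hiCB : ⟪C, B⟫ = t := by rw [real_inner_comm]; exact hiBC
  -- F is midpoint: sDist B F = s/2
  have hBF : sDist B F = s/2 := by
    have := hF.2
    rw [hBCs, hFmid] at this
    linarith [hFmid]
  have hFC : sDist F C = s/2 := by rw [← hFmid, hBF]
  have hiBF : ⟪B, F⟫ = u := by rw [← cos_sDist B F hB hFn, hBF]
  have hiFC : ⟪F, C⟫ = u := by rw [← cos_sDist F C hFn hC, hFC]
  have hiFB : ⟪F, B⟫ = u := by rw [real_inner_comm]; exact hiBF
  have hiCF : ⟪C, F⟫ = u := by rw [real_inner_comm]; exact hiFC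
  -- identify F with the normalized midpoint G
  set G : EuclideanSpace ℝ (Fin 3) := (2*u)⁻¹ • (B + C) with hG_def
  have hBB : ⟪B, B⟫ = 1 := by
    rw [real_inner_self_eq_norm_sq, hB]; norm_num
  have hCC : ⟪C, C⟫ = 1 := by
    rw [real_inner_self_eq_norm_sq, hC]; norm_num
  have hGG : ⟪G, G⟫ = 1 := by
    simp only [hG_def, real_inner_smul_left, real_inner_smul_right, inner_add_left,
      inner_add_right, hBB, hCC, hiBC, hiCB]
    field_simp
    linear_combination 2 * htu
  have hFG1 : ⟪F, G⟫ = 1 := by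
    simp only [hG_def, real_inner_smul_right, inner_add_right, hiFB, hiFC]
    field_simp
    ring
  have hGn2 : ‖G‖^2 = 1 := by rw [← real_inner_self_eq_norm_sq, hGG]
  have hFeq : F = G := by
    have h0 : ‖F - G‖^2 = 0 := by
      rw [norm_sub_sq_real, hFn, hFG1, hGn2]; ring
    have h1 : ‖F - G‖ = 0 := by
      have := sq_eq_zero_iff.mp h0
      exact this
    exact sub_eq_zero.mp (norm_eq_zero.mp h1)
  -- inner products with F
  have hiAF : ⟪A, F⟫ = t/u := by
    rw [hFeq]
    simp only [hG_def, real_inner_smul_right, inner_add_right, hiAB, hiAC]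
    field_simp; ring
  -- equal distances from D
  set c : ℝ := ⟪D, A⟫ with hc_def
  have hiDB : ⟪D, B⟫ = c := by
    have h := congrArg Real.cos hDA
    rw [cos_sDist D A hDn hA, cos_sDist D B hDn hB] at h
    exact h.symm
  have hiDC : ⟪D, C⟫ = c := by
    have h := congrArg Real.cos hDB
    rw [cos_sDist D B hDn hB, cos_sDist D C hDn hC] at h
    rw [← h, hiDB]
  have hiDF : ⟪D, F⟫ = c/u := by
    rw [hFeq]
    simp only [hG_def, real_inner_smul_right, inner_add_right, hiDB, hiDC]
    field_simp; ring
  -- the three distances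
  set m : ℝ := sDist A F with hm_def
  set Q : ℝ := sDist D F with hQ_def
  set R : ℝ := sDist A D with hR_def
  have hcosm : Real.cos m = t/u := by rw [hm_def, cos_sDist A F hA hFn, hiAF]
  have hcosQ : Real.cos Q = c/u := by rw [hQ_def, cos_sDist D F hDn hFn, hiDF]
  have hcosR : Real.cos R = c := by
    rw [hR_def, cos_sDist A D hA hDn, real_inner_comm]
  have hsum : R + Q = m := hD.2
  have hm0 : 0 ≤ m := sDist_nonneg A F
  have hmpi : m ≤ π := sDist_le_pi A F
  have hQ0 : 0 ≤ Q := sDist_nonneg D F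
  have hRpi : R ≤ π := sDist_le_pi A D
  have hR0 : 0 ≤ R := sDist_nonneg A D
  have htu01 : t/u < 1 := (div_lt_one hu).mpr htltu
  have htu00 : 0 < t/u := div_pos ht hu
  have hm_pos : 0 < m := by
    rcases lt_or_eq_of_le hm0 with h | h
    · exact h
    · rw [← h] at hcosm
      simp at hcosm
      linarith
  have hm_lt : m < π/2 := by
    by_contra h
    push_neg at h
    have := Real.cos_nonpos_of_pi_div_two_le_of_le h (by linarith)
    rw [hcosm] at this
    linarith
  -- contradiction setup
  by_contra hcon
  push_neg at hcon
  set x : ℝ := Real.cos (m/3) with hx_def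
  have hx0 : 0 < x := Real.cos_pos_of_mem_Ioo ⟨by linarith, by linarith⟩
  have hx1 : x < 1 := by
    have := Real.cos_lt_cos_of_nonneg_of_le_pi (le_refl 0) (by linarith) (by linarith : (0:ℝ) < m/3)
    simpa using this
  have hx2 : 3/4 < x^2 := by
    have h6 : x > Real.cos (π/6) := by
      exact Real.cos_lt_cos_of_nonneg_of_le_pi (by linarith) (by linarith) (by linarith)
    rw [Real.cos_pi_div_six] at h6
    exact sq_gt_of_gt_sqrt3div2 h6
  -- triple angle: t/u = 4x³ - 3x
  have htriple : t/u = 4*x^3 - 3*x := by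
    rw [← hcosm, show m = 3*(m/3) by ring, Real.cos_three_mul, ← hx_def]
  have h1 : 2*u^2 - 1 = u*(4*x^3 - 3*x) := by
    rw [← htriple]
    field_simp
    linarith
  -- from the contradiction hypothesis: Q ≤ m/3, so R ≥ 2m/3
  have hQle : Q ≤ m/3 := by linarith
  have hRge : 2*m/3 ≤ R := by linarith
  -- cos R ≤ cos(2m/3) = 2x² - 1
  have hcR : Real.cos R ≤ 2*x^2 - 1 := by
    have h := Real.cos_le_cos_of_nonneg_of_le_pi (by linarith : (0:ℝ) ≤ 2*m/3) hRpi hRge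
    rw [show 2*m/3 = 2*(m/3) by ring, Real.cos_two_mul, ← hx_def] at h
    exact h
  -- cos Q ≥ cos(m/3) = x
  have hcQ : x ≤ Real.cos Q := by
    have h := Real.cos_le_cos_of_nonneg_of_le_pi hQ0 (by linarith : m/3 ≤ π) hQle
    rw [← hx_def] at h
    exact h
  -- cos R = u * cos Q
  have hRQ : Real.cos R = u * Real.cos Q := by
    rw [hcosR, hcosQ]
    field_simp
  have h2 : u*x ≤ 2*x^2 - 1 := by
    have : u * x ≤ u * Real.cos Q := mul_le_mul_of_nonneg_left hcQ hu.le
    rw [← hRQ] at this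
    linarith
  -- final polynomial contradiction
  exact median_key u x hu hx0 hx2 hx1 h1 h2
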